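/- Let ε ∈ ℝ and let Φ_{1,ε} be the rational map Φ_{1,ε}(x,y) = ( (−2εx² + (1−ε²)x − 2εy² − 2εy)/D₁(x,y), (−2ε²x² + 2εx − 2ε²y² + (1−ε²)y)/D₁(x,y) ), D₁(x,y) = 4ε²x² + 4ε²y² + 4ε²y + ε² − 4εx + 1. Let X₁: ℝ² → ℝ² be the vector field X₁(x,y) = (−y + x² − y², x(1+2y)) of the isochronous system S₁. Then X₁ is a Lie symmetry of Φ_{1,ε}: for every (x,y) with D₁(x,y) ≠ 0, X₁(Φ_{1,ε}(x,y)) = JΦ_{1,ε}(x,y) · X₁(x,y), where JΦ_{1,ε}(x,y) is the Jacobian matrix of Φ_{1,ε} at (x,y). -/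

import Mathlib

/-- Denominator of the Kahan–Hirota–Kimura map `Φ_{1,ε}` of the isochronous
quadratic system `S₁`: `ẋ = -y + x² - y²`, `ẏ = x(1+2y)`. -/
noncomputable def D1 (ε x y : ℝ) : ℝ :=
  4 * ε ^ 2 * x ^ 2 + 4 * ε ^ 2 * y ^ 2 + 4 * ε ^ 2 * y + ε ^ 2 - 4 * ε * x + 1

/-- The Kahan–Hirota–Kimura map `Φ_{1,ε}` of the isochronous quadratic system `S₁`. -/
noncomputable def Phi1 (ε : ℝ) (q : ℝ × ℝ) : ℝ × ℝ :=
  ((-2 * ε * q.1 ^ 2 + (1 - ε ^ 2) * q.1 - 2 * ε * q.2 ^ 2 - 2 * ε * q.2) / D1 ε q.1 q.2,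
   (-2 * ε ^ 2 * q.1 ^ 2 + 2 * ε * q.1 - 2 * ε ^ 2 * q.2 ^ 2 + (1 - ε ^ 2) * q.2) /
      D1 ε q.1 q.2)

/-- The isochronous quadratic vector field `S₁`: `X₁(x,y) = (-y + x² - y², x(1+2y))`. -/
noncomputable def X1 (q : ℝ × ℝ) : ℝ × ℝ := (-q.2 + q.1 ^ 2 - q.2 ^ 2, q.1 * (1 + 2 * q.2))

/-!
In the coordinate `z = x + iy` the field `X₁` is the holomorphic Riccati field
`f z = z² + iz`, and `Φ_{1,ε}` is the Möbius map `φ z = (1 + iε) z / (1 - iε - 2εz)`, with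
`D₁ = |1 - iε - 2εz|²`. The real Jacobian of a holomorphic map acts as multiplication by its
complex derivative, so the compatibility equation reduces to the one-variable identity
`f (φ z) = φ' z * f z`, which holds because `(1 + iε) z + i (1 - iε - 2εz) = (1 - iε) (z + i)`.
-/

open Complex

/-- The Kahan discretization, with step `2ε`, of `ż = z² + iz`. -/
noncomputable def complexPhi1 (ε : ℝ) (z : ℂ) : ℂ := (1 + ε * I) * z / (1 - ε * I - 2 * ε * z)

theorem HasDerivAt.fderiv_equivRealProd_conj_apply {g : ℂ → ℂ} {g' z : ℂ}
    (h : HasDerivAt g g' z) (v : ℝ × ℝ) :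
    fderiv ℝ (equivRealProdCLM ∘ g ∘ equivRealProdCLM.symm) (equivRealProdCLM z) v =
      equivRealProdCLM (g' * equivRealProdCLM.symm v) := by
  have hg := h.hasFDerivAt.restrictScalars ℝ
  rw [← equivRealProdCLM.symm_apply_apply z] at hg
  rw [(equivRealProdCLM.hasFDerivAt.comp _ (hg.comp _ equivRealProdCLM.symm.hasFDerivAt)).fderiv]
  simp [mul_comm]

lemma normSq_complexPhi1_denom (ε : ℝ) (z : ℂ) :
    normSq (1 - ε * I - 2 * ε * z) = D1 ε z.re z.im := by
  simp only [normSq_apply, sub_re, one_re, mul_re, ofReal_re, I_re, mul_zero, ofReal_im, I_im,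
    mul_one, sub_self, sub_zero, re_ofNat, im_ofNat, mul_im, zero_mul, add_zero, sub_im, one_im,
    zero_sub, D1]
  ring

lemma Phi1_eq_conj_complexPhi1 (ε : ℝ) :
    Phi1 ε = equivRealProdCLM ∘ complexPhi1 ε ∘ equivRealProdCLM.symm := by
  funext q
  simp only [Phi1, neg_mul, Function.comp_apply, complexPhi1, equivRealProdCLM_apply, div_re,
    mul_re, add_re, one_re, ofReal_re, I_re, mul_zero, ofReal_im, I_im, mul_one, sub_self,
    add_zero, equivRealProdCLM_symm_apply_re, one_mul, add_im, one_im, mul_im, zero_add,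
    equivRealProdCLM_symm_apply_im, sub_re, sub_zero, re_ofNat, im_ofNat, zero_mul,
    normSq_complexPhi1_denom, sub_im, zero_sub, div_im, Prod.mk.injEq]
  constructor <;> ring

lemma X1_eq_conj : X1 = equivRealProdCLM ∘ (fun z => z ^ 2 + I * z) ∘ equivRealProdCLM.symm := by
  funext q
  simp only [X1, pow_two, Function.comp_apply, equivRealProdCLM_apply, add_re, mul_re,
    equivRealProdCLM_symm_apply_re, equivRealProdCLM_symm_apply_im, I_re, zero_mul, I_im,
    one_mul, zero_sub, add_im, mul_im, zero_add, Prod.mk.injEq]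
  constructor <;> ring

lemma hasDerivAt_complexPhi1 {ε : ℝ} {z : ℂ} (hz : 1 - ε * I - 2 * ε * z ≠ 0) :
    HasDerivAt (complexPhi1 ε)
      ((1 + ε * I) * (1 - ε * I) / (1 - ε * I - 2 * ε * z) ^ 2) z := by
  have hnum : HasDerivAt (fun w : ℂ => (1 + ε * I) * w) (1 + ε * I) z := by
    simpa using (hasDerivAt_id z).const_mul (1 + ε * I)
  have hden : HasDerivAt (fun w : ℂ => 1 - ε * I - 2 * ε * w) (-(2 * ε)) z := by
    simpa using ((hasDerivAt_id z).const_mul (2 * ε : ℂ)).const_sub (1 - ε * I)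
  exact (hnum.div hden hz).congr_deriv (by ring)

lemma complexPhi1_lieSymmetry (ε : ℝ) (z : ℂ) :
    complexPhi1 ε z ^ 2 + I * complexPhi1 ε z =
      (1 + ε * I) * (1 - ε * I) / (1 - ε * I - 2 * ε * z) ^ 2 * (z ^ 2 + I * z) := by
  simp only [complexPhi1]
  field_simp
  ring

/-- The vector field `X₁` of the system `S₁` is a Lie symmetry of its KHK map `Φ_{1,ε}`:
`X₁(Φ_{1,ε}(p)) = JΦ_{1,ε}(p)·X₁(p)` wherever `D₁ ≠ 0`. -/
theorem stmt_11 (ε : ℝ) (q : ℝ × ℝ) (hD : D1 ε q.1 q.2 ≠ 0) :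
    X1 (Phi1 ε q) = fderiv ℝ (Phi1 ε) q (X1 q) := by
  obtain ⟨z, rfl⟩ := equivRealProdCLM.surjective q
  have hz : 1 - ε * I - 2 * ε * z ≠ 0 := by
    rw [← normSq_eq_zero.ne, normSq_complexPhi1_denom]
    simpa using hD
  rw [Phi1_eq_conj_complexPhi1, X1_eq_conj,
    (hasDerivAt_complexPhi1 hz).fderiv_equivRealProd_conj_apply]
  simp only [Function.comp_apply, ContinuousLinearEquiv.symm_apply_apply,
    complexPhi1_lieSymmetry]
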